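/- arXiv:1205.6897 — 4 statements merged into one kernel-verified Lean document; each statement's English description precedes it below -/
import Mathlib

section
/- Let G be a gap sequence of genus g and λ the partition associated to G. Then for every positive integer a not belonging to G, the partial derivative ∂s_λ/∂t_a is identically zero; i.e., s_λ(t) does not depend on t_a for a ∉ G. -/
open MvPolynomial

/-- The polynomial `p_n(t)` defined by `exp(Σ_{n≥1} t_n k^n) = Σ_{n≥0} p_n(t) k^n`,
as a polynomial in the variables `t_1, t_2, ...` (variable `X n` stands for `t_n`). -/
noncomputable def pS (n : ℕ) : MvPolynomial ℕ ℚ :=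
  ∑ m ∈ Finset.range (n + 1), (Nat.factorial m : ℚ)⁻¹ •
    ∑ c ∈ Finset.univ.filter
        (fun c : Fin m → Fin (n + 1) =>
          (∑ j, ((c j : ℕ))) = n ∧ ∀ j, 1 ≤ (c j : ℕ)),
      ∏ j, X ((c j : ℕ))

/-- `p_n` for `n : ℤ`, with `p_n = 0` for `n < 0`. -/
noncomputable def pz (n : ℤ) : MvPolynomial ℕ ℚ :=
  if 0 ≤ n then pS n.toNat else 0

/-- The Schur function `s_λ(t) = det(p_{λ_i - i + j})_{1 ≤ i,j ≤ l}` (here `0`-indexed). -/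
noncomputable def schur {l : ℕ} (lam : Fin l → ℕ) : MvPolynomial ℕ ℚ :=
  Matrix.det (Matrix.of fun a b : Fin l =>
    pz ((lam a : ℤ) - ((a : ℕ) : ℤ) + ((b : ℕ) : ℤ)))

/-- Substitution `t_n ↦ (x_1^n + ⋯ + x_k^n)/n`, i.e. `t = [x_1] + ⋯ + [x_k]`. -/
noncomputable def toPowerSums (k : ℕ) (f : MvPolynomial ℕ ℚ) : MvPolynomial (Fin k) ℚ :=
  aeval (fun n : ℕ => (n : ℚ)⁻¹ • ∑ i : Fin k, X i ^ n) f

/-- Iterated partial derivative `∂_{i_1} ⋯ ∂_{i_r}` for a list `L = [i_1, ..., i_r]`. -/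
noncomputable def derivs (L : List ℕ) (f : MvPolynomial ℕ ℚ) : MvPolynomial ℕ ℚ :=
  L.foldr (fun i g => pderiv i g) f

/-- The entries of a partition `λ` padded by zeros (`0`-indexed). -/
def pad {l : ℕ} (lam : Fin l → ℕ) (a : ℕ) : ℕ := if h : a < l then lam ⟨a, h⟩ else 0

/-- `w_i`: the `(i+1)`-st smallest element of `G` (0-indexed: `wseq G 0 = w_1`). -/
def wseq (G : Finset ℕ) (i : ℕ) : ℕ := (G.sort (· ≤ ·)).getD i 0

/-- `w_i^*`: the `(i+1)`-st smallest element of the complement of `G`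
(0-indexed: `wstar G 0 = w_1^* = 0`). -/
noncomputable def wstar (G : Finset ℕ) (i : ℕ) : ℕ := Nat.nth (fun n => n ∉ G) i

/-- `m_k = #{i : w_i^* < g - k}`, the number of non-gaps below `g - k`. -/
def gapm (G : Finset ℕ) (g k : ℕ) : ℕ :=
  ((Finset.range (g - k)).filter (fun n => n ∉ G)).card

/-- `a^{(k)}_{j+1} = w_{g-k-j} - w_{j+1}^*` (0-indexed in `j`, `0 ≤ j < m_k`). -/
noncomputable def gapa (G : Finset ℕ) (g k j : ℕ) : ℕ :=
  wseq G (g - k - j - 1) - wstar G j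

/-- The partition associated to the gap sequence `G`:
`λ = (w_g, ..., w_1) - (g-1, ..., 1, 0)`, i.e. `λ_{a+1} = w_{g-a} - (g-1-a)` (0-indexed `a`). -/
def gapPart (G : Finset ℕ) (g a : ℕ) : ℕ := wseq G (g - 1 - a) - (g - 1 - a)


noncomputable def Qaux : ℕ → ℕ → MvPolynomial ℕ ℚ
  | 0, n => if n = 0 then 1 else 0
  | (m+1), n => ∑ k ∈ Finset.Icc 1 n, X k * Qaux m (n - k)

noncomputable def Qz (m : ℕ) (n : ℤ) : MvPolynomial ℕ ℚ :=
  if 0 ≤ n then Qaux m n.toNat else 0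

lemma Qaux_eq_zero : ∀ m n : ℕ, n < m → Qaux m n = 0
  | 0, n, h => absurd h (Nat.not_lt_zero n)
  | (m+1), n, h => by
    rw [Qaux]
    apply Finset.sum_eq_zero
    intro k hk
    simp only [Finset.mem_Icc] at hk
    rw [Qaux_eq_zero m (n - k) (by omega), mul_zero]

lemma Qz_eq_zero (m : ℕ) (n : ℤ) (h : n < m) : Qz m n = 0 := by
  rw [Qz]
  split_ifs with hn
  · exact Qaux_eq_zero m n.toNat (by omega)
  · rfl

lemma Qz_succ (m : ℕ) (N : ℕ) (n : ℤ) (hN : n ≤ N) :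
    Qz (m+1) n = ∑ k ∈ Finset.Icc 1 N, X k * Qz m (n - k) := by
  by_cases hn : 0 ≤ n
  · rw [Qz, if_pos hn, Qaux]
    have hsub : Finset.Icc 1 n.toNat ⊆ Finset.Icc 1 N :=
      Finset.Icc_subset_Icc_right (by omega)
    have key : ∀ k ∈ Finset.Icc 1 n.toNat, X k * Qaux m (n.toNat - k) = X k * Qz m (n - k) := by
      intro k hk
      simp only [Finset.mem_Icc] at hk
      rw [Qz, if_pos (show (0:ℤ) ≤ n - k by omega)]
      have h2 : (n - (k:ℤ)).toNat = n.toNat - k := by omega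
      rw [h2]
    rw [Finset.sum_congr rfl key]
    exact Finset.sum_subset hsub (by
      intro k hk hk2
      simp only [Finset.mem_Icc] at hk hk2
      rw [Qz_eq_zero m (n - k) (by omega), mul_zero])
  · rw [Qz, if_neg hn]
    symm
    apply Finset.sum_eq_zero
    intro k hk
    simp only [Finset.mem_Icc] at hk
    rw [Qz_eq_zero m (n - k) (by omega), mul_zero]

lemma sum_comps : ∀ (m : ℕ) (N n : ℕ), n ≤ N →
    (∑ c ∈ Finset.univ.filter
        (fun c : Fin m → Fin (N + 1) =>
          (∑ j, ((c j : ℕ))) = n ∧ ∀ j, 1 ≤ (c j : ℕ)),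
      ∏ j, X ((c j : ℕ))) = Qaux m n
  | 0, N, n, hn => by
    rw [Qaux, Finset.sum_filter]
    simp [eq_comm]
  | (m+1), N, n, hn => by
    rw [Finset.sum_filter, ← Equiv.sum_comp (Fin.consEquiv (fun _ : Fin (m+1) => Fin (N+1)))
      (fun c => if (∑ j, ((c j : ℕ))) = n ∧ ∀ j, 1 ≤ (c j : ℕ) then ∏ j, X ((c j : ℕ)) else 0),
      Fintype.sum_prod_type]
    have inner : ∀ k : Fin (N+1), (∑ c : Fin m → Fin (N+1),
        if (∑ j, ((Fin.consEquiv (fun _ : Fin (m+1) => Fin (N+1)) (k, c) j : ℕ))) = n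
            ∧ ∀ j, 1 ≤ ((Fin.consEquiv (fun _ : Fin (m+1) => Fin (N+1)) (k, c) j : ℕ))
          then ∏ j, X ((Fin.consEquiv (fun _ : Fin (m+1) => Fin (N+1)) (k, c) j : ℕ)) else 0)
        = if 1 ≤ (k : ℕ) ∧ (k : ℕ) ≤ n then X ((k:ℕ)) * Qaux m (n - (k:ℕ)) else 0 := by
      intro k
      have hc : ∀ c : Fin m → Fin (N+1),
          (Fin.consEquiv (fun _ : Fin (m+1) => Fin (N+1)) (k, c)) = Fin.cons (α := fun _ => Fin (N+1)) k c := fun c => rfl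
      simp only [hc]
      have key : ∀ c : Fin m → Fin (N+1),
          (if (∑ j, ((Fin.cons (α := fun _ => Fin (N+1)) k c j : Fin (N+1)) : ℕ)) = n
              ∧ ∀ j, 1 ≤ ((Fin.cons (α := fun _ => Fin (N+1)) k c j : Fin (N+1)) : ℕ)
            then ∏ j, X ((Fin.cons (α := fun _ => Fin (N+1)) k c j : Fin (N+1)) : ℕ) else 0)
          = if 1 ≤ (k : ℕ) ∧ (k : ℕ) ≤ n then
              (X ((k:ℕ)) * (if (∑ j, ((c j : ℕ))) = n - (k:ℕ) ∧ ∀ j, 1 ≤ (c j : ℕ)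
                then ∏ j, X ((c j : ℕ)) else (0 : MvPolynomial ℕ ℚ)))
            else 0 := by
        intro c
        rw [Fin.sum_univ_succ, Fin.prod_univ_succ]
        simp only [Fin.cons_zero, Fin.cons_succ, Fin.forall_fin_succ]
        by_cases hk : 1 ≤ (k : ℕ) ∧ (k : ℕ) ≤ n
        · rw [if_pos hk, mul_ite, mul_zero]
          congr 1
          apply propext
          constructor
          · rintro ⟨h1, _, h3⟩; exact ⟨by omega, h3⟩
          · rintro ⟨h1, h3⟩; exact ⟨by omega, hk.1, h3⟩
        · rw [if_neg hk]
          rw [if_neg]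
          rintro ⟨h1, h2, h3⟩
          have hsum : (k:ℕ) ≤ n := by omega
          exact hk ⟨h2, hsum⟩
      rw [Finset.sum_congr rfl (fun c _ => key c)]
      split_ifs with hk
      · rw [← Finset.mul_sum, ← Finset.sum_filter, sum_comps m N (n - (k:ℕ)) (by omega)]
      · exact Finset.sum_const_zero
    rw [Finset.sum_congr rfl (fun k _ => inner k), Qaux]
    rw [Fin.sum_univ_eq_sum_range (fun k => if 1 ≤ k ∧ k ≤ n then X k * Qaux m (n - k) else 0)]
    have hmem : ∀ i : ℕ, (1 ≤ i ∧ i ≤ n) = (i ∈ Finset.Icc 1 n) := by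
      intro i; simp [Finset.mem_Icc]
    simp only [hmem]
    rw [Finset.sum_ite_mem, Finset.inter_eq_right.mpr
      (fun i hi => Finset.mem_range.mpr (by
        have := Finset.mem_Icc.mp hi; omega))]

lemma pderiv_Qz (a : ℕ) (ha : 1 ≤ a) : ∀ (m : ℕ) (n : ℤ),
    pderiv a (Qz m n) = (m : ℚ) • Qz (m - 1) (n - a)
  | 0, n => by
    rw [Qz]
    split_ifs with h
    · rw [Qaux]
      split_ifs <;> simp
    · simp
  | (m+1), n => by
    have htn : n ≤ (n.toNat : ℤ) := Int.self_le_toNat n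
    rw [Qz_succ m n.toNat n htn, map_sum]
    have step : ∀ k ∈ Finset.Icc 1 n.toNat,
        pderiv a (X k * Qz m (n - k))
          = (if a = k then Qz m (n - a) else 0) + (m:ℚ) • (X k * Qz (m-1) ((n - a) - k)) := by
      intro k hk
      rw [pderiv_mul, pderiv_Qz a ha m (n - k)]
      congr 1
      · rcases eq_or_ne a k with h | h
        · subst h; rw [pderiv_X_self, if_pos rfl, one_mul]
        · rw [pderiv_X_of_ne (Ne.symm h), if_neg h, zero_mul]
      · rw [mul_smul_comm, show n - (k:ℤ) - a = n - a - k from by ring]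
    rw [Finset.sum_congr rfl step, Finset.sum_add_distrib]
    have h1 : (∑ k ∈ Finset.Icc 1 n.toNat, if a = k then Qz m (n - a) else 0)
        = Qz m (n - a) := by
      rw [Finset.sum_ite_eq (Finset.Icc 1 n.toNat) a (fun _ => Qz m (n - a))]
      split_ifs with h
      · rfl
      · rw [Finset.mem_Icc] at h
        rw [Qz_eq_zero m (n - a) (by omega)]
    have h2 : (∑ k ∈ Finset.Icc 1 n.toNat, (m:ℚ) • (X k * Qz (m-1) ((n - a) - k)))
        = (m:ℚ) • Qz m (n - a) := by
      rcases m with _ | m'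
      · simp
      · rw [← Finset.smul_sum]
        congr 1
        simp only [Nat.add_sub_cancel]
        rw [← Qz_succ m' n.toNat (n - a) (by omega)]
    rw [h1, h2, Nat.add_sub_cancel, Nat.cast_add, Nat.cast_one, add_smul, one_smul]
    exact add_comm _ _

lemma pS_eq (n : ℕ) : pS n = ∑ m ∈ Finset.range (n+1), (Nat.factorial m : ℚ)⁻¹ • Qaux m n := by
  rw [pS]
  exact Finset.sum_congr rfl (fun m _ => by rw [sum_comps m n n le_rfl])

lemma pz_sum (K : ℕ) (n : ℤ) (h : n < K) :
    pz n = ∑ m ∈ Finset.range K, (Nat.factorial m : ℚ)⁻¹ • Qz m n := by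
  by_cases hn : 0 ≤ n
  · rw [pz, if_pos hn, pS_eq]
    have key : ∀ m ∈ Finset.range (n.toNat + 1),
        (Nat.factorial m : ℚ)⁻¹ • Qaux m n.toNat = (Nat.factorial m : ℚ)⁻¹ • Qz m n := by
      intro m _
      rw [Qz, if_pos hn]
    rw [Finset.sum_congr rfl key]
    exact Finset.sum_subset (Finset.range_subset_range.mpr (by omega)) (by
      intro m hm hm2
      simp only [Finset.mem_range] at hm hm2
      rw [Qz_eq_zero m n (by omega), smul_zero])
  · rw [pz, if_neg hn]
    symm
    apply Finset.sum_eq_zero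
    intro m _
    rw [Qz, if_neg hn, smul_zero]

lemma pderiv_pz (a : ℕ) (ha : 1 ≤ a) (n : ℤ) : pderiv a (pz n) = pz (n - a) := by
  rw [pz_sum (n.toNat + 1) n (by omega), map_sum]
  have key : ∀ m ∈ Finset.range (n.toNat + 1),
      pderiv a ((Nat.factorial m : ℚ)⁻¹ • Qz m n)
        = ((Nat.factorial m : ℚ)⁻¹ * m) • Qz (m - 1) (n - a) := by
    intro m _
    rw [Derivation.map_smul, pderiv_Qz a ha m n, smul_smul]
  rw [Finset.sum_congr rfl key, Finset.sum_range_succ']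
  have h0 : ((Nat.factorial 0 : ℚ)⁻¹ * (0:ℕ)) • Qz (0 - 1) (n - a) = 0 := by
    simp
  rw [h0, add_zero]
  have key2 : ∀ m ∈ Finset.range n.toNat,
      ((Nat.factorial (m+1) : ℚ)⁻¹ * ((m+1:ℕ):ℚ)) • Qz (m + 1 - 1) (n - a)
        = (Nat.factorial m : ℚ)⁻¹ • Qz m (n - a) := by
    intro m _
    rw [Nat.add_sub_cancel]
    congr 1
    rw [Nat.factorial_succ]
    push_cast
    rw [mul_inv]
    field_simp
  rw [Finset.sum_congr rfl key2, ← pz_sum n.toNat (n - a) (by omega)]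

lemma pderiv_finprod {ι : Type*} [DecidableEq ι] (a : ℕ) (s : Finset ι)
    (f : ι → MvPolynomial ℕ ℚ) :
    pderiv a (∏ i ∈ s, f i) = ∑ i ∈ s, pderiv a (f i) * ∏ j ∈ s.erase i, f j := by
  induction s using Finset.induction_on with
  | empty => simp
  | @insert x s hx ih =>
    rw [Finset.prod_insert hx, pderiv_mul, ih, Finset.sum_insert hx,
      Finset.erase_insert hx, Finset.mul_sum]
    congr 1
    apply Finset.sum_congr rfl
    intro i hi
    have hix : i ≠ x := fun h => hx (h ▸ hi)
    rw [Finset.erase_insert_of_ne hix.symm,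
      Finset.prod_insert (fun h => hx (Finset.erase_subset _ _ h))]
    ring

lemma pderiv_det {l : ℕ} (a : ℕ) (M : Matrix (Fin l) (Fin l) (MvPolynomial ℕ ℚ)) :
    pderiv a M.det = ∑ i, (M.updateRow i fun j => pderiv a (M i j)).det := by
  simp only [Matrix.det_apply]
  rw [map_sum]
  have lhs : ∀ σ : Equiv.Perm (Fin l),
      pderiv a (Equiv.Perm.sign σ • ∏ i, M (σ i) i)
        = Equiv.Perm.sign σ • ∑ j, pderiv a (M (σ j) j) * ∏ i ∈ Finset.univ.erase j, M (σ i) i := by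
    intro σ
    rw [Units.smul_def, Units.smul_def, map_zsmul, pderiv_finprod]
  rw [Finset.sum_congr rfl (fun σ _ => lhs σ)]
  rw [Finset.sum_comm]
  apply Finset.sum_congr rfl
  intro σ _
  rw [← Finset.smul_sum]
  congr 1
  rw [← Equiv.sum_comp σ (fun i => ∏ k, (M.updateRow i fun j => pderiv a (M i j)) (σ k) k)]
  apply Finset.sum_congr rfl
  intro j _
  rw [← Finset.mul_prod_erase Finset.univ _ (Finset.mem_univ j)]
  congr 1
  · rw [Matrix.updateRow_self]
  · apply Finset.prod_congr rfl
    intro k hk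
    rw [Matrix.updateRow_ne (σ.injective.ne (Finset.ne_of_mem_erase hk))]

lemma pz_neg {n : ℤ} (h : n < 0) : pz n = 0 := by rw [pz, if_neg (not_le.mpr h)]

lemma wseq_eq {G : Finset ℕ} {i : ℕ} (h : i < G.card) :
    wseq G i = G.orderEmbOfFin rfl ⟨i, h⟩ := by
  have hl : i < (G.sort (· ≤ ·)).length := by rw [Finset.length_sort]; exact h
  rw [wseq, Finset.orderEmbOfFin_apply, List.getD_eq_getElem _ _ hl]
  rfl

lemma wseq_mem {G : Finset ℕ} {i : ℕ} (h : i < G.card) : wseq G i ∈ G := by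
  rw [wseq_eq h]; exact Finset.orderEmbOfFin_mem G rfl _

lemma wseq_lt {G : Finset ℕ} {i j : ℕ} (hij : i < j) (h : j < G.card) :
    wseq G i < wseq G j := by
  rw [wseq_eq (lt_trans hij h), wseq_eq h]
  exact (G.orderEmbOfFin rfl).strictMono (show (⟨i, lt_trans hij h⟩ : Fin G.card) < ⟨j, h⟩ from hij)

lemma le_wseq {G : Finset ℕ} : ∀ {i : ℕ}, i < G.card → i ≤ wseq G i
  | 0, _ => Nat.zero_le _
  | (i+1), h => le_trans (Nat.succ_le_succ (le_wseq (by omega))) (wseq_lt (Nat.lt_succ_self i) h)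

lemma wseq_surj {G : Finset ℕ} {x : ℕ} (hx : x ∈ G) : ∃ i, i < G.card ∧ wseq G i = x := by
  have : x ∈ Set.range (G.orderEmbOfFin rfl) := by
    rw [Finset.range_orderEmbOfFin]; exact hx
  obtain ⟨⟨i, hi⟩, hix⟩ := this
  exact ⟨i, hi, by rw [wseq_eq hi]; exact hix⟩


/-- Let `G` be a gap sequence of genus `g` (a set of `g` naturals whose
complement contains `0` and is closed under addition) and `λ` the associated partition.
Then `s_λ(t)` does not depend on `t_a` for any positive `a ∉ G`. -/
theorem statement2 (g : ℕ) (hg : 1 ≤ g) (G : Finset ℕ)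
    (hcard : G.card = g) (h0 : 0 ∉ G)
    (hadd : ∀ a b : ℕ, a ∉ G → b ∉ G → a + b ∉ G)
    (a : ℕ) (ha : 1 ≤ a) (haG : a ∉ G) :
    pderiv a (schur (fun i : Fin g => gapPart G g i)) = 0 := by
  rw [schur, pderiv_det]
  apply Finset.sum_eq_zero
  intro i _
  set M : Matrix (Fin g) (Fin g) (MvPolynomial ℕ ℚ) := Matrix.of fun a b : Fin g =>
    pz ((gapPart G g a : ℤ) - ((a : ℕ) : ℤ) + ((b : ℕ) : ℤ)) with hM
  set w : ℕ := wseq G (g - 1 - (i : ℕ)) with hw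
  have hig : (i : ℕ) < g := i.isLt
  have hidx : g - 1 - (i : ℕ) < G.card := by omega
  have hwmem : w ∈ G := wseq_mem hidx
  have hwge : g - 1 - (i : ℕ) ≤ w := le_wseq hidx
  have hcast : (gapPart G g (i : ℕ) : ℤ) = (w : ℤ) - ((g : ℤ) - 1 - (i : ℕ)) := by
    rw [gapPart, ← hw, Nat.cast_sub hwge]
    congr 1
    omega
  have hrowval : ∀ b : Fin g, pderiv a (M i b) = pz ((w : ℤ) - ((g:ℤ) - 1) + b - a) := by
    intro b
    rw [hM]
    show pderiv a (pz _) = _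
    rw [pderiv_pz a ha, hcast]
    congr 1
    ring
  by_cases hcase : w < a
  · apply Matrix.det_eq_zero_of_row_eq_zero i
    intro j
    rw [Matrix.updateRow_self, hrowval j]
    apply pz_neg
    have hjg : (j : ℕ) < g := j.isLt
    omega
  · push_neg at hcase
    have hwa : w - a ∈ G := by
      by_contra hna
      have := hadd (w - a) a hna haG
      rw [Nat.sub_add_cancel hcase] at this
      exact this hwmem
    obtain ⟨i0, hi0g, hi0⟩ := wseq_surj hwa
    rw [hcard] at hi0g
    set i' : Fin g := ⟨g - 1 - i0, by omega⟩ with hi'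
    have hlt : w - a < w := by omega
    have hne : i' ≠ i := by
      intro h
      have : g - 1 - (i' : ℕ) = g - 1 - (i : ℕ) := by rw [h]
      have hi'v : (i' : ℕ) = g - 1 - i0 := rfl
      have h2 : g - 1 - (i' : ℕ) = i0 := by omega
      rw [h2] at this
      rw [← this] at hw
      omega
    have hrow : (fun j => pderiv a (M i j)) = M i' := by
      funext j
      rw [hrowval j, hM]
      show _ = pz _
      have hcast' : (gapPart G g (i' : ℕ) : ℤ) = ((w - a : ℕ) : ℤ) - ((g : ℤ) - 1 - (i' : ℕ)) := by
        rw [gapPart]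
        have hi'v : (i' : ℕ) = g - 1 - i0 := rfl
        have h2 : g - 1 - (i' : ℕ) = i0 := by omega
        have hle : i0 ≤ w - a := hi0 ▸ le_wseq (show i0 < G.card by omega)
        rw [h2, hi0, Nat.cast_sub hle]
        congr 1
        rw [hi'v]
        omega
      rw [hcast']
      congr 1
      have : ((w - a : ℕ) : ℤ) = (w : ℤ) - a := by omega
      rw [this]
      ring
    rw [hrow]
    exact Matrix.det_updateRow_eq_zero hne
end

section
/- Let G be a gap sequence of genus g, λ the partition associated to G, and 0 ≤ k ≤ g−1. Then Σ_{i=1}^{m_k} a^{(k)}_i = N_{λ,k}, where N_{λ,k} = λ_{k+1}+⋯+λ_g. -/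
open MvPolynomial

/-!
Put `n = g - k`. The gaps below `n` are `w_1 < ⋯ < w_c` and the non-gaps below `n` are
`w_1^* < ⋯ < w_{m_k}^*`, with `c + m_k = n`, so together they sum to `0 + 1 + ⋯ + (n - 1)`.
Since `w_{c+1}, …, w_n ≥ n > w_j^*`, the sum `Σ_j a^{(k)}_j` equals
`(w_{c+1} + ⋯ + w_n) - Σ_j w_j^* = (w_1 + ⋯ + w_n) - (0 + ⋯ + (n - 1))`,
and reversing the order of summation in `N_{λ,k}` gives the same expression.
-/

open Finset

namespace Nat

variable (p : ℕ → Prop) [DecidablePred p]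

variable {p} in
theorem lt_card_of_lt_count {n k : ℕ} (h : k < count p n) :
    ∀ hf : (Set.ofPred p).Finite, k < #hf.toFinset :=
  fun hf => h.trans_le (count_le_card hf n)

variable {p} in
theorem le_nth_of_count_le_of_lt_card {n k : ℕ} (h : count p n ≤ k)
    (hk : ∀ hf : (Set.ofPred p).Finite, k < #hf.toFinset) : n ≤ nth p k := by
  by_contra! hlt
  have := count_monotone p (succ_le_of_lt hlt)
  rw [count_nth_succ hk] at this
  omega

theorem count_add_count_not (n : ℕ) : count p n + count (¬p ·) n = n := by
  rw [count_eq_card_filter_range, count_eq_card_filter_range,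
    card_filter_add_card_filter_not, card_range]

theorem image_nth_range_count (n : ℕ) :
    (range (count p n)).image (nth p) = (range n).filter p := by
  ext x
  simp only [mem_image, mem_filter, mem_range]
  constructor
  · rintro ⟨j, hj, rfl⟩
    exact ⟨nth_lt_of_lt_count hj, nth_mem j (lt_card_of_lt_count hj)⟩
  · rintro ⟨hx, hpx⟩
    exact ⟨count p x, count_strict_mono hpx hx, nth_count hpx⟩

theorem sum_nth_range_count (n : ℕ) :
    ∑ j ∈ range (count p n), nth p j = ∑ x ∈ (range n).filter p, x := by
  rw [← image_nth_range_count, sum_image]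
  intro i hi j hj hij
  rw [coe_range, Set.mem_Iio] at hi hj
  rw [← count_nth (lt_card_of_lt_count hi), hij, count_nth (lt_card_of_lt_count hj)]

theorem sum_nth_range_count_add_sum_nth_not (n : ℕ) :
    ∑ j ∈ range (count p n), nth p j + ∑ j ∈ range (count (¬p ·) n), nth (¬p ·) j
      = ∑ i ∈ range n, i := by
  rw [sum_nth_range_count, sum_nth_range_count, sum_filter_add_sum_filter_not]

theorem sum_range_count_not_nth_tsub (n : ℕ)
    (hn : ∀ hf : (Set.ofPred p).Finite, n ≤ #hf.toFinset) :
    ∑ j ∈ range (count (¬p ·) n), (nth p (n - j - 1) - nth (¬p ·) j)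
      = ∑ i ∈ range n, (nth p i - i) := by
  have hparts := sum_nth_range_count_add_sum_nth_not p n
  set c := count p n
  set m := count (¬p ·) n
  have hcm : c + m = n := count_add_count_not p n
  have hlt : ∀ {i}, i < n → ∀ hf : (Set.ofPred p).Finite, i < #hf.toFinset :=
    fun hi hf => hi.trans_le (hn hf)
  have hle : ∀ j ∈ range m, nth (¬p ·) j ≤ nth p (n - j - 1) := by
    intro j hj
    rw [mem_range] at hj
    exact (nth_lt_of_lt_count hj).le.trans
      (le_nth_of_count_le_of_lt_card (by omega) (hlt (by omega)))
  have hupper : ∑ j ∈ range m, nth p (n - j - 1) = ∑ i ∈ Ico c n, nth p i := by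
    rw [sum_Ico_eq_sum_range, ← sum_range_reflect, show n - c = m by omega]
    refine sum_congr rfl fun j hj => ?_
    rw [mem_range] at hj
    congr 1
    omega
  have hdiag : ∑ i ∈ range n, (nth p i - i) = ∑ i ∈ range n, nth p i - ∑ i ∈ range n, i :=
    sum_tsub_distrib _ fun i hi => le_nth (hlt (mem_range.1 hi))
  have hsplit := sum_range_add_sum_Ico (nth p) (show c ≤ n by omega)
  rw [sum_tsub_distrib _ hle, hupper, hdiag]
  omega

end Nat

open Nat

theorem toFinset_ofPred_mem (G : Finset ℕ) (hf : (Set.ofPred (· ∈ G)).Finite) :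
    hf.toFinset = G := by
  ext
  simp

theorem wseq_eq_nth (G : Finset ℕ) : wseq G = nth (· ∈ G) := by
  ext i
  rw [nth_eq_getD_sort (p := (· ∈ G)) G.finite_toSet, toFinset_ofPred_mem, wseq]

theorem statement4_general (g : ℕ) (G : Finset ℕ)
    (hcard : G.card = g)
    (k : ℕ) :
    ∑ j ∈ Finset.range (gapm G g k), gapa G g k j
      = ∑ a ∈ Finset.Ico k g, gapPart G g a := by
  have hm : gapm G g k = count (· ∉ G) (g - k) := (count_eq_card_filter_range _ _).symm
  have hpart : ∑ a ∈ Ico k g, gapPart G g a = ∑ i ∈ range (g - k), (nth (· ∈ G) i - i) := by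
    rw [sum_Ico_eq_sum_range, ← sum_range_reflect]
    refine sum_congr rfl fun j hj => ?_
    rw [mem_range] at hj
    rw [gapPart, wseq_eq_nth, show g - 1 - (k + (g - k - 1 - j)) = j by omega]
  have hlen : ∀ hf : (Set.ofPred (· ∈ G)).Finite, g - k ≤ #hf.toFinset := fun hf => by
    rw [toFinset_ofPred_mem, hcard]
    exact sub_le g k
  rw [hm, hpart, ← sum_range_count_not_nth_tsub _ _ hlen]
  simp only [gapa, wseq_eq_nth, wstar]

/-- For a gap sequence `G` of genus `g`, its associated partition `λ`,
and `0 ≤ k ≤ g-1`: `Σ_{i=1}^{m_k} a^{(k)}_i = N_{λ,k} = λ_{k+1} + ⋯ + λ_g`. -/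
theorem statement4 (g : ℕ) (hg : 1 ≤ g) (G : Finset ℕ)
    (hcard : G.card = g) (h0 : 0 ∉ G)
    (hadd : ∀ a b : ℕ, a ∉ G → b ∉ G → a + b ∉ G)
    (k : ℕ) (hk : k < g) :
    ∑ j ∈ Finset.range (gapm G g k), gapa G g k j
      = ∑ a ∈ Finset.Ico k g, gapPart G g a :=
  statement4_general g G hcard k
end

section
/- Let λ=(λ_1,...,λ_l) be a partition of length l. Then the polynomial s_λ([x_1]−[x_2]) in x_1, x_2 is not identically zero if and only if λ_i = 1 for all 2 ≤ i ≤ l, i.e., if and only if λ is a hook (λ = (λ_1, 1^{l−1})). -/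
/-!
Under `t = [x] - [y]` the recursion `n p_n = ∑ i t_i p_{n-i}` (the derivative of the exponential)
gives `p_0 = 1` and `p_n = x^{n-1} (x - y)` for `n ≥ 1`;
in particular `p_{m+1} = x p_m` once `m ≥ 1`.
If `λ_2 ≥ 2`, every entry of the first two rows of the Jacobi–Trudi matrix has index at least `1`,
so the first row is a power of `x` times the second and the determinant vanishes.
For a hook, subtracting `x` times each column from the next one makes the matrix lower triangular
with diagonal `p_{λ_1}, -y, …, -y`, and `p_{λ_1} ≠ 0`.
-/

open MvPolynomial

/-- Substitution `t_n ↦ (x_1^n - x_2^n)/n`, i.e. `t = [x_1] - [x_2]`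
(here `x_1 = X 0`, `x_2 = X 1`). -/
noncomputable def toDiff (f : MvPolynomial ℕ ℚ) : MvPolynomial (Fin 2) ℚ :=
  aeval (fun n : ℕ => (n : ℚ)⁻¹ • (X 0 ^ n - X 1 ^ n)) f

namespace SchurHook

open Finset

def compositions (m n : ℕ) : Finset (Fin m → ℕ) :=
  (Nat.antidiagonalTuple m n).filter fun c => ∀ j, 1 ≤ c j

section Compositions

variable {M : Type*} [AddCommMonoid M] {m n : ℕ}

lemma mem_compositions {c : Fin m → ℕ} :
    c ∈ compositions m n ↔ ∑ j, c j = n ∧ ∀ j, 1 ≤ c j := by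
  simp [compositions, Nat.mem_antidiagonalTuple]

lemma le_of_mem_compositions {c : Fin m → ℕ} (hc : c ∈ compositions m n) (j : Fin m) :
    c j ≤ n :=
  (mem_compositions.mp hc).1 ▸ single_le_sum (fun i _ => Nat.zero_le (c i)) (mem_univ j)

lemma compositions_eq_empty_of_lt (h : n < m) : compositions m n = ∅ := by
  refine eq_empty_of_forall_notMem fun c hc => ?_
  obtain ⟨hsum, hpos⟩ := mem_compositions.mp hc
  have : ∑ _j : Fin m, 1 ≤ ∑ j, c j := sum_le_sum fun j _ => hpos j
  simp only [sum_const, card_univ, Fintype.card_fin, smul_eq_mul, mul_one] at this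
  omega

lemma compositions_zero_left (hn : n ≠ 0) : compositions 0 n = ∅ := by
  refine eq_empty_of_forall_notMem fun c hc => hn ?_
  simpa using (mem_compositions.mp hc).1.symm

lemma sum_compositions_comp_perm (σ : Equiv.Perm (Fin m)) (f : (Fin m → ℕ) → M) :
    ∑ c ∈ compositions m n, f (c ∘ σ) = ∑ c ∈ compositions m n, f c := by
  have hmem : ∀ τ : Equiv.Perm (Fin m), ∀ c ∈ compositions m n, c ∘ τ ∈ compositions m n := by
    intro τ c hc
    obtain ⟨hsum, hpos⟩ := mem_compositions.mp hc
    exact mem_compositions.mpr ⟨(Equiv.sum_comp τ c).trans hsum, fun j => hpos _⟩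
  exact sum_nbij' (· ∘ σ) (· ∘ σ.symm) (hmem σ) (hmem σ.symm)
    (fun c _ => by ext; simp) (fun c _ => by ext; simp) fun _ _ => rfl

lemma sum_compositions_succ (f : (Fin (m + 1) → ℕ) → M) :
    ∑ c ∈ compositions (m + 1) n, f c
      = ∑ i ∈ range n, ∑ c ∈ compositions m (n - (i + 1)), f (Fin.snoc c (i + 1)) := by
  rw [sum_sigma']
  refine sum_nbij' (fun c => ⟨c (Fin.last m) - 1, Fin.init c⟩)
    (fun p => Fin.snoc p.2 (p.1 + 1)) ?_ ?_ ?_ ?_ ?_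
  · intro c hc
    obtain ⟨hsum, hpos⟩ := mem_compositions.mp hc
    have hlast := hpos (Fin.last m)
    rw [Fin.sum_univ_castSucc] at hsum
    simp only [mem_sigma, mem_range]
    refine ⟨by omega, mem_compositions.mpr ⟨?_, fun j => hpos j.castSucc⟩⟩
    simp only [Fin.init]
    omega
  · rintro ⟨i, c⟩ hp
    simp only [mem_sigma, mem_range] at hp
    obtain ⟨hi, hc⟩ := hp
    obtain ⟨hsum, hpos⟩ := mem_compositions.mp hc
    refine mem_compositions.mpr ⟨?_, Fin.lastCases (by simp) fun j => by simpa using hpos j⟩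
    simp only [Fin.sum_univ_castSucc, Fin.snoc_castSucc, Fin.snoc_last, hsum]
    omega
  · intro c hc
    have hlast := (mem_compositions.mp hc).2 (Fin.last m)
    simp only [Nat.sub_add_cancel hlast, Fin.snoc_init_self]
  · rintro ⟨i, c⟩ _
    simp
  · intro c hc
    have hlast := (mem_compositions.mp hc).2 (Fin.last m)
    simp only [Nat.sub_add_cancel hlast, Fin.snoc_init_self]

end Compositions

lemma sum_compositions_succ_prod_X (m n : ℕ) :
    (n : ℚ) • ∑ c ∈ compositions (m + 1) n, ∏ j, (X (c j) : MvPolynomial ℕ ℚ)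
      = ((m + 1 : ℕ) : ℚ) • ∑ i ∈ range n, ∑ c ∈ compositions m (n - (i + 1)),
          ((i + 1 : ℕ) : ℚ) • (X (i + 1) * ∏ j, X (c j)) := by
  -- `n = ∑ j, c j`, and by symmetry every part contributes as much as the last one
  have hsplit : (n : ℚ) • ∑ c ∈ compositions (m + 1) n, ∏ j, (X (c j) : MvPolynomial ℕ ℚ)
      = ∑ j : Fin (m + 1), ∑ c ∈ compositions (m + 1) n, (c j : ℚ) • ∏ k, X (c k) := by
    rw [smul_sum, sum_comm]
    refine sum_congr rfl fun c hc => ?_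
    rw [← sum_smul, ← (mem_compositions.mp hc).1, Nat.cast_sum]
  have hsymm : ∀ j : Fin (m + 1),
      ∑ c ∈ compositions (m + 1) n, (c j : ℚ) • ∏ k, (X (c k) : MvPolynomial ℕ ℚ)
        = ∑ c ∈ compositions (m + 1) n, (c (Fin.last m) : ℚ) • ∏ k, X (c k) := by
    intro j
    rw [← sum_compositions_comp_perm (Equiv.swap j (Fin.last m))]
    refine sum_congr rfl fun c _ => ?_
    simp only [Function.comp_apply, Equiv.swap_apply_left]
    rw [Equiv.prod_comp (Equiv.swap j (Fin.last m)) fun k => X (c k)]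
  rw [hsplit, sum_congr rfl fun j _ => hsymm j, sum_const, card_univ, Fintype.card_fin,
    ← Nat.cast_smul_eq_nsmul ℚ, sum_compositions_succ]
  simp only [Fin.snoc_last, Fin.prod_univ_castSucc, Fin.snoc_castSucc, mul_comm]

lemma pS_eq_sum_compositions {n N : ℕ} (h : n < N) :
    pS n = ∑ m ∈ range N, (m.factorial : ℚ)⁻¹ •
      ∑ c ∈ compositions m n, ∏ j, (X (c j) : MvPolynomial ℕ ℚ) := by
  have hfin : ∀ m, ∑ c ∈ univ.filter (fun c : Fin m → Fin (n + 1) =>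
        ∑ j, (c j : ℕ) = n ∧ ∀ j, 1 ≤ (c j : ℕ)), ∏ j, (X (c j : ℕ) : MvPolynomial ℕ ℚ)
      = ∑ c ∈ compositions m n, ∏ j, X (c j) := by
    intro m
    refine sum_nbij' (fun c j => c j) (fun c j => ⟨min (c j) n, by omega⟩) ?_ ?_ ?_ ?_
      fun _ _ => rfl
    · intro c hc
      simpa [mem_compositions] using hc
    · intro c hc
      have hmin : ∀ j, min (c j) n = c j := fun j => min_eq_left (le_of_mem_compositions hc j)
      simpa [hmin] using mem_compositions.mp hc
    · intro c _
      ext j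
      simp [(c j).is_le]
    · intro c hc
      ext j
      simp [le_of_mem_compositions hc j]
  rw [pS]
  simp only [hfin]
  refine sum_subset (range_subset_range.mpr (by omega)) fun m _ hm => ?_
  rw [compositions_eq_empty_of_lt (by simpa using hm), sum_empty, smul_zero]

lemma pS_zero : pS 0 = 1 := by
  rw [pS_eq_sum_compositions zero_lt_one, sum_range_one]
  have : compositions 0 0 = {Fin.elim0} := by
    ext c
    simp [mem_compositions, Subsingleton.elim c Fin.elim0]
  simp [this]

lemma natCast_smul_pS_succ (n : ℕ) :
    ((n + 1 : ℕ) : ℚ) • pS (n + 1)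
      = ∑ i ∈ range (n + 1), ((i + 1 : ℕ) : ℚ) • (X (i + 1) * pS (n - i)) := by
  rw [pS_eq_sum_compositions (Nat.lt_succ_self (n + 1)), smul_sum, sum_range_succ',
    compositions_zero_left n.succ_ne_zero, sum_empty, smul_zero, smul_zero, add_zero]
  have hfact : ∀ m : ℕ,
      ((m + 1).factorial : ℚ)⁻¹ * ((m + 1 : ℕ) : ℚ) = (m.factorial : ℚ)⁻¹ := by
    intro m
    rw [Nat.factorial_succ, Nat.cast_mul, mul_inv, mul_comm, ← mul_assoc,
      mul_inv_cancel₀ (by positivity), one_mul]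
  simp only [smul_comm ((n + 1 : ℕ) : ℚ), sum_compositions_succ_prod_X, smul_smul, hfact,
    Nat.add_sub_add_right]
  simp only [smul_sum]
  rw [sum_comm]
  refine sum_congr rfl fun i _ => ?_
  rw [pS_eq_sum_compositions (n := n - i) (N := n + 1) (by omega)]
  simp only [smul_sum, mul_sum, mul_smul_comm, smul_comm ((i + 1 : ℕ) : ℚ)]

lemma aeval_pS_of_recursion {A : Type*} [CommRing A] [Algebra ℚ A] (t f : ℕ → A)
    (h0 : f 0 = 1)
    (hrec : ∀ n, ((n + 1 : ℕ) : ℚ) • f (n + 1)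
      = ∑ i ∈ range (n + 1), ((i + 1 : ℕ) : ℚ) • (t (i + 1) * f (n - i))) (n : ℕ) :
    aeval t (pS n) = f n := by
  induction n using Nat.strong_induction_on with
  | _ n ih =>
    rcases n with _ | n
    · rw [pS_zero, map_one, h0]
    · have h := congrArg (aeval t) (natCast_smul_pS_succ n)
      simp only [map_smul, map_sum, map_mul, aeval_X] at h
      rw [sum_congr rfl fun i _ => by rw [ih (n - i) (by omega)], ← hrec] at h
      exact smul_right_injective A (by positivity) h

section PDiff

variable {A : Type*} [CommRing A] (x y : A)

/-- `p_n([x] - [y])`, read off from `exp (∑ (x^n - y^n) k^n / n) = (1 - y k) / (1 - x k)`. -/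
def pDiff : ℕ → A
  | 0 => 1
  | k + 1 => x ^ k * (x - y)

def pDiffZ (m : ℤ) : A := if 0 ≤ m then pDiff x y m.toNat else 0

lemma sum_pow_sub_pow_mul_pDiff (n : ℕ) :
    ∑ i ∈ range (n + 1), (x ^ (i + 1) - y ^ (i + 1)) * pDiff x y (n - i)
      = (n + 1) * pDiff x y (n + 1) := by
  have hterm : ∀ k ∈ range n, (x ^ (n - (k + 1) + 1) - y ^ (n - (k + 1) + 1)) * pDiff x y (k + 1)
      = x ^ n * (x - y) - y * (x ^ k * y ^ (n - 1 - k) * (x - y)) := by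
    intro k hk
    obtain ⟨r, rfl⟩ := Nat.exists_eq_add_of_lt (mem_range.mp hk)
    rw [show k + r + 1 - (k + 1) = r by omega, show k + r + 1 - 1 - k = r by omega, pDiff]
    ring
  calc ∑ i ∈ range (n + 1), (x ^ (i + 1) - y ^ (i + 1)) * pDiff x y (n - i)
      = ∑ k ∈ range (n + 1), (x ^ (n - k + 1) - y ^ (n - k + 1)) * pDiff x y k := by
        rw [← sum_range_reflect]
        refine sum_congr rfl fun k hk => ?_
        rw [show n + 1 - 1 - k = n - k by omega, Nat.sub_sub_self (mem_range_succ_iff.mp hk)]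
    _ = ∑ k ∈ range n, (x ^ n * (x - y) - y * (x ^ k * y ^ (n - 1 - k) * (x - y)))
          + (x ^ (n + 1) - y ^ (n + 1)) := by
        rw [sum_range_succ', ← sum_congr rfl hterm, Nat.sub_zero, pDiff, mul_one]
    _ = (n + 1) * pDiff x y (n + 1) := by
        rw [sum_sub_distrib, sum_const, card_range, nsmul_eq_mul, ← mul_sum, ← sum_mul,
          geom_sum₂_mul, pDiff]
        ring

lemma pDiff_ne_zero [IsDomain A] {x y : A} (hx : x ≠ 0) (hxy : x ≠ y) : ∀ n, pDiff x y n ≠ 0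
  | 0 => one_ne_zero
  | k + 1 => mul_ne_zero (pow_ne_zero k hx) (sub_ne_zero.mpr hxy)

lemma pDiffZ_natCast (n : ℕ) : pDiffZ x y n = pDiff x y n := by
  simp [pDiffZ]

lemma pDiffZ_of_neg {m : ℤ} (h : m < 0) : pDiffZ x y m = 0 :=
  if_neg h.not_ge

lemma pDiffZ_sub_mul_pDiffZ_sub_one (m : ℤ) :
    pDiffZ x y m - x * pDiffZ x y (m - 1) = if m = 0 then 1 else if m = 1 then -y else 0 := by
  rcases lt_or_ge m 0 with hm | hm
  · rw [pDiffZ_of_neg x y hm, pDiffZ_of_neg x y (by omega), if_neg (by omega), if_neg (by omega)]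
    ring
  lift m to ℕ using hm
  rcases m with _ | _ | k
  · simp [pDiffZ, pDiff]
  · simp [pDiffZ, pDiff]
  · rw [show ((k + 2 : ℕ) : ℤ) - 1 = ((k + 1 : ℕ) : ℤ) by push_cast; ring, pDiffZ_natCast,
      pDiffZ_natCast, pDiff, pDiff, if_neg (by omega), if_neg (by omega)]
    ring

lemma pDiffZ_add_natCast {m : ℤ} (hm : 1 ≤ m) (d : ℕ) :
    pDiffZ x y (m + d) = x ^ d * pDiffZ x y m := by
  induction d with
  | zero => simp
  | succ d ih =>
    have hstep := pDiffZ_sub_mul_pDiffZ_sub_one x y (m + (d + 1 : ℕ))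
    rw [if_neg (by omega), if_neg (by omega), sub_eq_zero] at hstep
    rw [hstep, show m + ((d + 1 : ℕ) : ℤ) - 1 = m + d by push_cast; ring, ih]
    ring

end PDiff

lemma toDiff_pS (n : ℕ) : toDiff (pS n) = pDiff (X 0) (X 1) n := by
  refine aeval_pS_of_recursion _ _ rfl (fun n => ?_) n
  simp only [smul_mul_assoc]
  rw [sum_congr rfl fun i _ => smul_inv_smul₀ (Nat.cast_ne_zero.mpr i.succ_ne_zero) _,
    sum_pow_sub_pow_mul_pDiff, Nat.cast_smul_eq_nsmul, nsmul_eq_mul, Nat.cast_succ]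

lemma toDiff_pz (m : ℤ) : toDiff (pz m) = pDiffZ (X 0) (X 1) m := by
  unfold pz pDiffZ
  split_ifs
  · exact toDiff_pS _
  · exact map_zero _

section JacobiTrudi

variable {A : Type*} [CommRing A] (x y : A) {l : ℕ}

def jtDiff (lam : Fin l → ℕ) : Matrix (Fin l) (Fin l) A :=
  Matrix.of fun a b => pDiffZ x y ((lam a : ℤ) - (a : ℕ) + (b : ℕ))

lemma toDiff_schur (lam : Fin l → ℕ) :
    toDiff (schur lam) = (jtDiff (X 0) (X 1) lam).det := by
  rw [schur, toDiff, ← AlgHom.coe_toRingHom, RingHom.map_det]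
  congr 1
  exact Matrix.ext fun a b => toDiff_pz _

lemma det_jtDiff_eq_zero (lam : Fin l → ℕ) {a b : Fin l} (hab : a ≠ b)
    (hb : (b : ℤ) + 1 ≤ lam b) (hba : (lam b : ℤ) - b ≤ lam a - a) :
    (jtDiff x y lam).det = 0 := by
  set M := jtDiff x y lam
  set d := ((lam a : ℤ) - a - (lam b - b)).toNat
  have hrow : M a = x ^ d • M b := by
    ext j
    simp only [M, jtDiff, Matrix.of_apply, Pi.smul_apply, smul_eq_mul]
    rw [← pDiffZ_add_natCast x y (by omega) d]
    congr 1
    omega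
  calc M.det = (M.updateRow a (x ^ d • M b)).det := by rw [← hrow, Matrix.updateRow_eq_self]
    _ = x ^ d * (M.updateRow a (M b)).det := Matrix.det_updateRow_smul _ _ _ _
    _ = 0 := by
      rw [Matrix.det_zero_of_row_eq hab (by simp [Matrix.updateRow_ne hab.symm]), mul_zero]

def colShift (n : ℕ) : Matrix (Fin n) (Fin n) A :=
  Matrix.of fun c b => if c = b then 1 else if (c : ℕ) + 1 = b then -x else 0

lemma det_colShift (n : ℕ) : (colShift x n).det = 1 := by
  have htri : (colShift x n).IsUpperTriangular := by
    intro c b hbc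
    have : (b : ℕ) < c := hbc
    simp only [colShift, Matrix.of_apply]
    rw [if_neg (by omega), if_neg (by omega)]
  rw [Matrix.det_of_isUpperTriangular htri]
  exact prod_eq_one fun c _ => by simp [colShift]

lemma mul_colShift_apply_zero {n : ℕ} (M : Matrix (Fin (n + 1)) (Fin (n + 1)) A)
    (a : Fin (n + 1)) : (M * colShift x (n + 1)) a 0 = M a 0 := by
  rw [Matrix.mul_apply, Fintype.sum_eq_single 0 fun c hc => by simp [colShift, hc]]
  simp [colShift]

lemma mul_colShift_apply_succ {n : ℕ} (M : Matrix (Fin (n + 1)) (Fin (n + 1)) A)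
    (a : Fin (n + 1)) (j : Fin n) :
    (M * colShift x (n + 1)) a j.succ = M a j.succ - x * M a j.castSucc := by
  rw [Matrix.mul_apply, Fintype.sum_eq_add j.succ j.castSucc (Fin.castSucc_lt_succ (i := j)).ne']
  · simp [colShift, Fin.ext_iff]
    ring
  · rintro c ⟨h1, h2⟩
    simp only [colShift, Matrix.of_apply, if_neg h1]
    rw [if_neg (fun h => h2 (Fin.ext (by simp at h ⊢; omega))), mul_zero]

lemma det_jtDiff_of_isHook (lam : Fin (l + 1) → ℕ) (h0 : 1 ≤ lam 0)
    (hhook : ∀ i : Fin (l + 1), 1 ≤ (i : ℕ) → lam i = 1) :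
    (jtDiff x y lam).det = pDiffZ x y (lam 0) * (-y) ^ l := by
  have hP : ∀ a (j : Fin l), (jtDiff x y lam * colShift x (l + 1)) a j.succ
      = if (lam a : ℤ) - a + (j + 1) = 0 then 1
        else if (lam a : ℤ) - a + (j + 1) = 1 then -y else 0 := by
    intro a j
    rw [mul_colShift_apply_succ, ← pDiffZ_sub_mul_pDiffZ_sub_one]
    simp only [jtDiff, Matrix.of_apply, Fin.val_succ, Fin.val_castSucc]
    congr 3
    ring
  have htri : (jtDiff x y lam * colShift x (l + 1)).IsLowerTriangular := by
    intro a b hab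
    have hab : (a : ℕ) < b := hab
    obtain ⟨j, rfl⟩ := Fin.exists_succ_eq.mpr (show b ≠ 0 from fun h => by simp [h] at hab)
    simp only [Fin.val_succ] at hab
    have hm : 2 ≤ (lam a : ℤ) - a + (j + 1) := by
      rcases Nat.eq_zero_or_pos (a : ℕ) with ha | ha
      · obtain rfl : a = 0 := Fin.ext ha
        simp only [Fin.val_zero, Nat.cast_zero]
        omega
      · have := hhook a ha
        omega
    rw [hP, if_neg (by omega), if_neg (by omega)]
  rw [← mul_one (jtDiff x y lam).det, ← det_colShift x (l + 1), ← Matrix.det_mul,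
    Matrix.det_of_isLowerTriangular _ htri, Fin.prod_univ_succ, mul_colShift_apply_zero]
  have hdiag : ∀ i : Fin l, (jtDiff x y lam * colShift x (l + 1)) i.succ i.succ = -y := by
    intro i
    have := hhook i.succ (by simp)
    rw [hP, if_neg (by simp; omega), if_pos (by simp; omega)]
  rw [prod_congr rfl fun i _ => hdiag i, prod_const, card_univ, Fintype.card_fin]
  simp [jtDiff]

end JacobiTrudi

end SchurHook

open SchurHook in
/-- For a partition `λ` of length `l`, the polynomial
`s_λ([x_1] - [x_2])` is not identically zero iff `λ_i = 1` for all `2 ≤ i ≤ l`,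
i.e. iff `λ` is a hook. -/
theorem statement12 (l : ℕ) (hl : 1 ≤ l) (lam : Fin l → ℕ)
    (hanti : Antitone lam) (hpos : ∀ i, 1 ≤ lam i) :
    toDiff (schur lam) ≠ 0 ↔ ∀ i : Fin l, 1 ≤ (i : ℕ) → lam i = 1 := by
  obtain ⟨l, rfl⟩ := Nat.exists_eq_add_of_le' hl
  rw [toDiff_schur]
  constructor
  · intro hdet i hi
    by_contra hne
    obtain ⟨i₁, hi₁⟩ : ∃ i₁ : Fin (l + 1), (i₁ : ℕ) = 1 := ⟨⟨1, by omega⟩, rfl⟩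
    have hlam₁ := hanti (show i₁ ≤ i from Fin.le_def.mpr (by omega))
    have hlam₀ := hanti (Fin.zero_le i₁)
    have := hpos i
    refine hdet (det_jtDiff_eq_zero _ _ lam (a := 0) (b := i₁) ?_ ?_ ?_) <;>
      simp only [ne_eq, Fin.ext_iff, Fin.val_zero, hi₁] <;> omega
  · intro hhook
    have hX : (X 0 : MvPolynomial (Fin 2) ℚ) ≠ X 1 := X_injective.ne (by decide)
    rw [det_jtDiff_of_isHook _ _ lam (hpos 0) hhook, pDiffZ_natCast]
    exact mul_ne_zero (pDiff_ne_zero (X_ne_zero 0) hX _)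
      (pow_ne_zero _ (neg_ne_zero.mpr (X_ne_zero 1)))
end

section
/- Let λ=(λ_1,...,λ_l) be a partition of length l and set N'_{λ,1} = λ_2+⋯+λ_l − (l−1). If n < N'_{λ,1}, then ∂_1^n s_λ(t) evaluated at t = [x_1]−[x_2] is identically zero as a polynomial in x_1, x_2. -/
open MvPolynomial

/-!
Newton's identity `n p_n = ∑_{k=1}^n k t_k p_{n-k}` gives `∂₁ p_{n+1} = p_n` and
`p_{n+1}([x₁] - [x₂]) = (x₁ - x₂) x₁ⁿ`. Differentiating the Jacobi–Trudi determinant row by row,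
`∂₁ⁿ s_λ` is a sum of determinants `det (p_{d_a + b})` with `∑ d_a = ∑ (λ_a - a) - n` and
`d_a ≤ λ_1`. After the substitution, rows with equal `d_a` coincide and all rows with `d_a ≥ 1`
are multiples of one another. So a term survives only if the `d_a` are distinct and at most one
of them is positive, which forces `∑ d_a ≤ λ_1 - (0 + 1 + ⋯ + (l - 2))`, i.e.
`n ≥ λ_2 + ⋯ + λ_l - (l - 1)`.
-/

open Finset

section Derivation

variable {R A : Type*} [CommSemiring R] [CommRing A] [Algebra R A] (D : Derivation R A A)

theorem Derivation.leibniz_finset_prod {ι : Type*} [DecidableEq ι] (s : Finset ι) (f : ι → A) :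
    D (∏ i ∈ s, f i) = ∑ i ∈ s, D (f i) * ∏ j ∈ s.erase i, f j := by
  induction s using Finset.induction_on with
  | empty => simp
  | insert a s ha ih =>
    rw [prod_insert ha, Derivation.leibniz, ih, sum_insert ha, erase_insert ha, smul_eq_mul,
      smul_eq_mul, mul_sum, add_comm, mul_comm (D (f a))]
    congr 1
    refine sum_congr rfl fun j hj => ?_
    rw [erase_insert_of_ne (ne_of_mem_of_not_mem hj ha).symm, prod_insert (mt mem_of_mem_erase ha)]
    ring

theorem Derivation.map_det {n : Type*} [Fintype n] [DecidableEq n] (M : Matrix n n A) :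
    D M.det = ∑ i, (M.updateRow i fun j => D (M i j)).det := by
  simp only [← Matrix.det_transpose (M.updateRow _ _), ← Matrix.updateCol_transpose,
    ← M.det_transpose, Matrix.det_apply, map_sum, Units.smul_def, map_zsmul,
    Derivation.leibniz_finset_prod]
  rw [sum_comm]
  refine sum_congr rfl fun σ _ => ?_
  rw [smul_sum]
  refine sum_congr rfl fun i _ => ?_
  rw [← mul_prod_erase univ _ (mem_univ i)]
  congr 2
  · simp
  · refine prod_congr rfl fun j hj => ?_
    rw [Matrix.updateCol_ne (ne_of_mem_erase hj)]

end Derivation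

theorem sum_add_sum_range_le_of_injective {ι : Type*} [Fintype ι] {d : ι → ℤ} {M : ℤ}
    (hM0 : 0 ≤ M) (hd : Function.Injective d) (hM : ∀ i, d i ≤ M)
    (hpos : {i | 0 < d i}.Subsingleton) :
    ∑ i, d i + ∑ k ∈ range (Fintype.card ι - 1), (k : ℤ) ≤ M := by
  classical
  set s := univ.filter fun i => d i ≤ 0
  set t := univ.filter fun i => ¬d i ≤ 0
  have ht : #t ≤ 1 :=
    card_le_one.2 fun i hi j hj => hpos (by simpa [t] using hi) (by simpa [t] using hj)
  have hs : Fintype.card ι - 1 ≤ #s := by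
    have hst : #s + #t = Fintype.card ι := by rw [card_filter_add_card_filter_not, card_univ]
    omega
  have hsum_t : ∑ i ∈ t, d i ≤ M :=
    calc ∑ i ∈ t, d i ≤ #t • M := sum_le_card_nsmul _ _ _ fun i _ => hM i
      _ ≤ 1 • M := nsmul_le_nsmul_left hM0 ht
      _ = M := one_nsmul M
  have hsum_s : ∑ i ∈ s, d i ≤ -∑ k ∈ range (Fintype.card ι - 1), (k : ℤ) :=
    calc ∑ i ∈ s, d i = ∑ x ∈ s.image d, x := (sum_image (f := id) fun i _ j _ h => hd h).symm
      _ ≤ ∑ k ∈ range #(s.image d), (0 - (k : ℤ)) :=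
        sum_le_sum_range fun x hx => by
          obtain ⟨i, hi, rfl⟩ := mem_image.1 hx
          exact (mem_filter.1 hi).2
      _ ≤ -∑ k ∈ range (Fintype.card ι - 1), (k : ℤ) := by
        simp only [card_image_of_injective _ hd, zero_sub, sum_neg_distrib, neg_le_neg_iff]
        exact sum_le_sum_of_subset_of_nonneg (range_subset_range.2 hs)
          fun k _ _ => Nat.cast_nonneg k
  rw [← sum_filter_add_sum_filter_not univ fun i => d i ≤ 0]
  linarith

section ShiftMatrix

variable {R : Type*} [CommRing R] {l : ℕ}

def shiftMatrix (q : ℤ → R) (d : Fin l → ℤ) : Matrix (Fin l) (Fin l) R :=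
  Matrix.of fun i j => q (d i + j)

variable {q : ℤ → R} {x : R}

theorem det_shiftMatrix_eq_zero_of_le {d : Fin l → ℤ} (hq : ∀ m : ℕ, q (m + 1) = x ^ m * q 1)
    {a a' : Fin l} (hne : a ≠ a') (h1 : 1 ≤ d a') (hle : d a' ≤ d a) :
    (shiftMatrix q d).det = 0 := by
  set N := shiftMatrix q d
  obtain ⟨m, hm⟩ : ∃ m : ℕ, d a' = m + 1 := ⟨(d a' - 1).toNat, by omega⟩
  obtain ⟨k, hk⟩ : ∃ k : ℕ, d a = d a' + k := ⟨(d a - d a').toNat, by omega⟩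
  have hrow : N a = x ^ k • N a' := by
    funext j
    simp only [N, shiftMatrix, Matrix.of_apply, Pi.smul_apply, smul_eq_mul, hk, hm]
    rw [show (m : ℤ) + 1 + k + j = ((m + k + j : ℕ) : ℤ) + 1 by push_cast; ring,
      show (m : ℤ) + 1 + j = ((m + j : ℕ) : ℤ) + 1 by push_cast; ring, hq, hq]
    ring
  rw [← N.updateRow_eq_self a, hrow, Matrix.det_updateRow_smul,
    Matrix.det_zero_of_row_eq hne (by rw [Matrix.updateRow_self, Matrix.updateRow_ne hne.symm]),
    mul_zero]

theorem det_shiftMatrix_eq_zero_of_lt_sum (hq : ∀ m : ℕ, q (m + 1) = x ^ m * q 1)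
    {d : Fin l → ℤ} {M : ℕ} (hM : ∀ a, d a ≤ M)
    (h : (M : ℤ) < ∑ a, d a + ∑ k ∈ range (l - 1), (k : ℤ)) :
    (shiftMatrix q d).det = 0 := by
  by_contra hdet
  have hd : Function.Injective d := fun a a' hda => by
    by_contra hne
    exact hdet (Matrix.det_zero_of_row_eq hne
      (funext fun j => by simp only [shiftMatrix, Matrix.of_apply, hda]))
  have hpos : {a | 0 < d a}.Subsingleton := fun a ha a' ha' => by
    by_contra hne
    rcases le_total (d a) (d a') with hle | hle
    · exact hdet (det_shiftMatrix_eq_zero_of_le hq (Ne.symm hne) ha hle)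
    · exact hdet (det_shiftMatrix_eq_zero_of_le hq hne ha' hle)
  have := sum_add_sum_range_le_of_injective (Nat.cast_nonneg M) hd hM hpos
  rw [Fintype.card_fin] at this
  omega

end ShiftMatrix

/-- Newton's recursion for the coefficients `1, (x - y), (x - y) x, (x - y) x², …` of
`(1 - y k) / (1 - x k) = exp (∑ (xⁿ - yⁿ) kⁿ / n)`. -/
theorem sum_Icc_sub_pow_mul_add {R : Type*} [CommRing R] (x y : R) (n : ℕ) :
    ∑ k ∈ Icc 1 n, (x ^ k - y ^ k) * ((x - y) * x ^ (n - k)) + (x ^ (n + 1) - y ^ (n + 1))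
      = (n + 1) * ((x - y) * x ^ n) := by
  induction n with
  | zero => simp
  | succ n ih =>
    have hshift : ∑ k ∈ Icc 1 n, (x ^ k - y ^ k) * ((x - y) * x ^ (n + 1 - k))
        = x * ∑ k ∈ Icc 1 n, (x ^ k - y ^ k) * ((x - y) * x ^ (n - k)) := by
      rw [mul_sum]
      refine sum_congr rfl fun k hk => ?_
      rw [mem_Icc] at hk
      rw [show n + 1 - k = n - k + 1 by omega]
      ring
    rw [sum_Icc_succ_top (by omega), hshift, Nat.sub_self, eq_sub_of_add_eq ih]
    push_cast
    ring

def compositionTuples (m n : ℕ) : Finset (Fin m → ℕ) :=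
  {c ∈ Nat.antidiagonalTuple m n | ∀ j, 0 < c j}

@[simp]
theorem mem_compositionTuples {m n : ℕ} {c : Fin m → ℕ} :
    c ∈ compositionTuples m n ↔ ∑ j, c j = n ∧ ∀ j, 0 < c j := by
  simp [compositionTuples, Nat.mem_antidiagonalTuple]

theorem le_of_mem_compositionTuples {m n : ℕ} {c : Fin m → ℕ} (hc : c ∈ compositionTuples m n)
    (j : Fin m) : c j ≤ n :=
  (mem_compositionTuples.1 hc).1 ▸ single_le_sum (fun _ _ => Nat.zero_le _) (mem_univ j)

theorem compositionTuples_eq_empty {m n : ℕ} (h : n < m) : compositionTuples m n = ∅ := by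
  refine eq_empty_of_forall_notMem fun c hc => ?_
  obtain ⟨hsum, hpos⟩ := mem_compositionTuples.1 hc
  have : ∑ _j : Fin m, 1 ≤ ∑ j, c j := sum_le_sum fun j _ => hpos j
  simp only [sum_const, card_univ, Fintype.card_fin, smul_eq_mul, mul_one] at this
  omega

theorem sum_compositionTuples_comp_perm {M : Type*} [AddCommMonoid M] {m n : ℕ}
    (σ : Equiv.Perm (Fin m)) (f : (Fin m → ℕ) → M) :
    ∑ c ∈ compositionTuples m n, f (c ∘ σ) = ∑ c ∈ compositionTuples m n, f c := by
  refine sum_nbij' (· ∘ σ) (· ∘ σ.symm) ?_ ?_ ?_ ?_ fun _ _ => rfl <;>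
    intro c <;> simp +contextual [Function.comp_def, Equiv.sum_comp]

theorem sum_compositionTuples_succ {M : Type*} [AddCommMonoid M] {m n : ℕ}
    (f : ℕ → (Fin m → ℕ) → M) :
    ∑ c ∈ compositionTuples (m + 1) n, f (c 0) (Fin.tail c)
      = ∑ k ∈ Icc 1 n, ∑ c ∈ compositionTuples m (n - k), f k c := by
  rw [sum_sigma']
  refine sum_bij' (fun c _ => ⟨c 0, Fin.tail c⟩) (fun x _ => Fin.cons x.1 x.2) ?_ ?_ ?_ ?_ ?_
  · intro c hc
    simp only [mem_compositionTuples, Fin.sum_univ_succ, Fin.forall_fin_succ] at hc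
    simp only [mem_sigma, mem_Icc, mem_compositionTuples, Fin.tail]
    exact ⟨⟨hc.2.1, by omega⟩, by omega, hc.2.2⟩
  · rintro ⟨k, c⟩ hc
    simp only [mem_sigma, mem_Icc, mem_compositionTuples] at hc
    simp only [mem_compositionTuples, Fin.sum_univ_succ, Fin.forall_fin_succ, Fin.cons_zero,
      Fin.cons_succ]
    exact ⟨by omega, hc.1.1, hc.2.2⟩
  · intro c _; exact Fin.cons_self_tail c
  · rintro ⟨k, c⟩ _; simp
  · intro c _; rfl

noncomputable def compositionPoly (m n : ℕ) : MvPolynomial ℕ ℚ :=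
  ∑ c ∈ compositionTuples m n, ∏ j, X (c j)

theorem compositionPoly_eq_zero {m n : ℕ} (h : n < m) : compositionPoly m n = 0 := by
  rw [compositionPoly, compositionTuples_eq_empty h, sum_empty]

theorem compositionPoly_zero_left {n : ℕ} (hn : n ≠ 0) : compositionPoly 0 n = 0 := by
  obtain ⟨k, rfl⟩ := Nat.exists_eq_succ_of_ne_zero hn
  simp [compositionPoly, compositionTuples, Nat.antidiagonalTuple_zero_succ]

theorem pS_zero : pS 0 = 1 := by
  simp [pS]

theorem nsmul_compositionPoly_succ (m n : ℕ) :
    n • compositionPoly (m + 1) n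
      = (m + 1) • ∑ k ∈ Icc 1 n, k • (X k * compositionPoly m (n - k)) := by
  calc n • compositionPoly (m + 1) n
      = ∑ j, ∑ c ∈ compositionTuples (m + 1) n, c j • ∏ i, (X (c i) : MvPolynomial ℕ ℚ) := by
        rw [compositionPoly, smul_sum, sum_comm]
        refine sum_congr rfl fun c hc => ?_
        rw [← sum_smul, (mem_compositionTuples.1 hc).1]
    _ = ∑ _j : Fin (m + 1), ∑ c ∈ compositionTuples (m + 1) n,
          c 0 • ∏ i, (X (c i) : MvPolynomial ℕ ℚ) := by
        refine sum_congr rfl fun j _ => ?_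
        -- the parts of a composition are exchangeable
        rw [← sum_compositionTuples_comp_perm (Equiv.swap 0 j)]
        refine sum_congr rfl fun c _ => ?_
        simp only [Function.comp_apply, Equiv.swap_apply_right]
        rw [Equiv.prod_comp (Equiv.swap 0 j) fun i => (X (c i) : MvPolynomial ℕ ℚ)]
    _ = (m + 1) • ∑ k ∈ Icc 1 n, k • (X k * compositionPoly m (n - k)) := by
        simp only [sum_const, card_univ, Fintype.card_fin, Fin.prod_univ_succ]
        congr 1
        simp only [compositionPoly, mul_sum, smul_sum]
        exact sum_compositionTuples_succ fun k (c : Fin m → ℕ) =>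
          k • (X k * ∏ i, X (c i) : MvPolynomial ℕ ℚ)

theorem pS_eq_sum_compositionPoly {n N : ℕ} (hN : n < N) :
    pS n = ∑ m ∈ range N, (m.factorial : ℚ)⁻¹ • compositionPoly m n := by
  have hcoe : ∀ m, ∑ c ∈ univ.filter (fun c : Fin m → Fin (n + 1) =>
      (∑ j, (c j : ℕ)) = n ∧ ∀ j, 1 ≤ (c j : ℕ)), ∏ j, (X (c j : ℕ) : MvPolynomial ℕ ℚ)
        = compositionPoly m n := by
    intro m
    refine sum_nbij' (fun c j => c j) (fun c j => Fin.ofNat (n + 1) (c j)) ?_ ?_ ?_ ?_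
      fun _ _ => rfl
    · intro c hc
      simpa [Nat.one_le_iff_ne_zero, Nat.pos_iff_ne_zero] using hc
    · intro c hc
      have hle := le_of_mem_compositionTuples hc
      simp only [mem_compositionTuples] at hc
      simp only [Fin.ofNat_eq_cast, mem_filter, mem_univ, Fin.val_natCast,
        Nat.mod_eq_of_lt (Nat.lt_succ_of_le (hle _)), true_and]
      exact hc
    · intro c _; ext j; simp
    · intro c hc
      funext j
      simp [Nat.mod_eq_of_lt (Nat.lt_succ_of_le (le_of_mem_compositionTuples hc j))]
  rw [pS]
  simp only [hcoe]
  refine sum_subset (range_subset_range.2 hN) fun m hmN hmn => ?_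
  rw [compositionPoly_eq_zero (by simpa using hmn), smul_zero]

theorem nsmul_pS (n : ℕ) : n • pS n = ∑ k ∈ Icc 1 n, k • (X k * pS (n - k)) := by
  have hfact : ∀ m : ℕ, ∀ v : MvPolynomial ℕ ℚ,
      ((m + 1).factorial : ℚ)⁻¹ • (m + 1) • v = (m.factorial : ℚ)⁻¹ • v := by
    intro m v
    rw [← Nat.cast_smul_eq_nsmul ℚ, smul_smul, Nat.factorial_succ, Nat.cast_mul,
      mul_inv_rev, mul_assoc, inv_mul_cancel₀ (by positivity), mul_one]
  have hzero : n • compositionPoly 0 n = 0 := by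
    rcases eq_or_ne n 0 with rfl | hn
    · exact zero_smul _ _
    · rw [compositionPoly_zero_left hn, smul_zero]
  calc n • pS n
      = ∑ m ∈ range n, (m.factorial : ℚ)⁻¹ •
          ∑ k ∈ Icc 1 n, k • (X k * compositionPoly m (n - k)) := by
        rw [pS_eq_sum_compositionPoly (Nat.lt_succ_self n), smul_sum, sum_range_succ']
        simp only [smul_comm n, nsmul_compositionPoly_succ, hfact, hzero, smul_zero, add_zero]
    _ = ∑ k ∈ Icc 1 n, k • (X k * pS (n - k)) := by
        simp only [smul_sum]
        rw [sum_comm]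
        refine sum_congr rfl fun k hk => ?_
        rw [pS_eq_sum_compositionPoly (N := n) (by simp at hk; omega), mul_sum, smul_sum]
        simp only [mul_smul_comm, smul_comm k]

theorem pderiv_one_pS_succ (n : ℕ) : pderiv 1 (pS (n + 1)) = pS n := by
  induction n using Nat.strong_induction_on with
  | _ n ih =>
  refine nsmul_right_injective (Nat.succ_ne_zero n) ?_
  calc (n + 1) • pderiv 1 (pS (n + 1))
      = ∑ k ∈ Icc 1 (n + 1), k • (X k * pderiv 1 (pS (n + 1 - k)))
        + ∑ k ∈ Icc 1 (n + 1), k • (pS (n + 1 - k) * pderiv 1 (X k)) := by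
        rw [← map_nsmul, nsmul_pS, map_sum, ← sum_add_distrib]
        refine sum_congr rfl fun k _ => ?_
        rw [map_nsmul, Derivation.leibniz, smul_eq_mul, smul_eq_mul, smul_add, add_comm,
          mul_comm (pS _)]
    _ = n • pS n + pS n := by
        congr 1
        · rw [sum_Icc_succ_top (by omega), Nat.sub_self, pS_zero, Derivation.map_one_eq_zero,
            mul_zero, smul_zero, add_zero, nsmul_pS]
          refine sum_congr rfl fun k hk => ?_
          rw [mem_Icc] at hk
          rw [show n + 1 - k = n - k + 1 by omega, ih _ (by omega)]
        · rw [sum_eq_single 1 (fun k _ hk => by simp [pderiv_X, hk]) (by simp)]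
          simp
    _ = (n + 1) • pS n := (succ_nsmul _ _).symm

noncomputable def toDiffAlgHom : MvPolynomial ℕ ℚ →ₐ[ℚ] MvPolynomial (Fin 2) ℚ :=
  aeval fun n : ℕ => (n : ℚ)⁻¹ • (X 0 ^ n - X 1 ^ n)

theorem coe_toDiffAlgHom : ⇑toDiffAlgHom = toDiff := rfl

theorem toDiff_pS_succ (n : ℕ) : toDiff (pS (n + 1)) = (X 0 - X 1) * X 0 ^ n := by
  induction n using Nat.strong_induction_on with
  | _ n ih =>
  refine nsmul_right_injective (Nat.succ_ne_zero n) ?_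
  rw [← coe_toDiffAlgHom] at ih ⊢
  have hterm : ∀ k ∈ Icc 1 (n + 1), toDiffAlgHom (k • (X k * pS (n + 1 - k)))
      = (X 0 ^ k - X 1 ^ k) * toDiffAlgHom (pS (n + 1 - k)) := by
    intro k hk
    have hk0 : (k : ℚ) ≠ 0 := by rw [mem_Icc] at hk; exact_mod_cast (by omega : k ≠ 0)
    rw [map_nsmul, map_mul, toDiffAlgHom, aeval_X, smul_mul_assoc, ← Nat.cast_smul_eq_nsmul ℚ,
      smul_smul, mul_inv_cancel₀ hk0, one_smul]
  calc (n + 1) • toDiffAlgHom (pS (n + 1))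
      = ∑ k ∈ Icc 1 n, (X 0 ^ k - X 1 ^ k) * ((X 0 - X 1) * X 0 ^ (n - k))
        + (X 0 ^ (n + 1) - X 1 ^ (n + 1)) := by
        rw [← map_nsmul, nsmul_pS, map_sum, sum_congr rfl hterm, sum_Icc_succ_top (by omega),
          Nat.sub_self, pS_zero, map_one, mul_one]
        congr 1
        refine sum_congr rfl fun k hk => ?_
        rw [mem_Icc] at hk
        rw [show n + 1 - k = n - k + 1 by omega, ih _ (by omega)]
    _ = (n + 1) • ((X 0 - X 1) * X 0 ^ n) := by
        rw [sum_Icc_sub_pow_mul_add, nsmul_eq_mul]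
        push_cast
        ring

theorem pderiv_one_pz (m : ℤ) : pderiv 1 (pz m) = pz (m - 1) := by
  rcases lt_trichotomy m 0 with h | rfl | h
  · rw [pz, pz, if_neg (by omega), if_neg (by omega), map_zero]
  · rw [pz, pz, if_pos le_rfl, if_neg (by omega), Int.toNat_zero, pS_zero,
      Derivation.map_one_eq_zero]
  · rw [pz, pz, if_pos h.le, if_pos (by omega), show m.toNat = (m - 1).toNat + 1 by omega,
      pderiv_one_pS_succ]

theorem toDiffAlgHom_pz_natCast_add_one (m : ℕ) :
    toDiffAlgHom (pz ((m : ℤ) + 1)) = X 0 ^ m * toDiffAlgHom (pz 1) := by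
  have h : ∀ k : ℕ, pz ((k : ℤ) + 1) = pS (k + 1) := fun k => by
    rw [pz, if_pos (by omega)]
    rfl
  rw [h, show pz 1 = pS 1 from h 0, coe_toDiffAlgHom, toDiff_pS_succ, toDiff_pS_succ]
  ring

theorem pderiv_one_det_shiftMatrix_pz {l : ℕ} (d : Fin l → ℤ) :
    pderiv 1 (shiftMatrix pz d).det = ∑ a, (shiftMatrix pz (d - Pi.single a 1)).det := by
  rw [Derivation.map_det]
  refine sum_congr rfl fun a _ => congrArg Matrix.det ?_
  ext i j
  rcases eq_or_ne i a with rfl | hne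
  · simp only [shiftMatrix, Matrix.of_apply, Matrix.updateRow_self, pderiv_one_pz,
      Pi.sub_apply, Pi.single_eq_same, sub_add_eq_add_sub]
  · simp only [shiftMatrix, Matrix.of_apply, Matrix.updateRow_ne hne, Pi.sub_apply,
      Pi.single_eq_of_ne hne, sub_zero]

theorem derivs_append (L₁ L₂ : List ℕ) (f : MvPolynomial ℕ ℚ) :
    derivs (L₁ ++ L₂) f = derivs L₁ (derivs L₂ f) :=
  List.foldr_append

theorem derivs_sum {ι : Type*} (L : List ℕ) (s : Finset ι) (f : ι → MvPolynomial ℕ ℚ) :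
    derivs L (∑ i ∈ s, f i) = ∑ i ∈ s, derivs L (f i) := by
  induction L with
  | nil => rfl
  | cons i L ih => exact (congrArg (pderiv i) ih).trans (map_sum _ _ _)

theorem toDiff_derivs_replicate_det_shiftMatrix_pz_eq_zero {l : ℕ} (n : ℕ) {d : Fin l → ℤ}
    {M : ℕ} (hM : ∀ a, d a ≤ M) (h : (M : ℤ) + n < ∑ a, d a + ∑ k ∈ range (l - 1), (k : ℤ)) :
    toDiff (derivs (List.replicate n 1) (shiftMatrix pz d).det) = 0 := by
  induction n generalizing d with
  | zero =>
    rw [List.replicate_zero, ← coe_toDiffAlgHom]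
    exact (AlgHom.map_det _ _).trans <| det_shiftMatrix_eq_zero_of_lt_sum
      (q := fun m => toDiffAlgHom (pz m)) toDiffAlgHom_pz_natCast_add_one hM (by simpa using h)
  | succ n ih =>
    rw [List.replicate_succ', derivs_append]
    change toDiff (derivs _ (pderiv 1 (shiftMatrix pz d).det)) = 0
    rw [pderiv_one_det_shiftMatrix_pz, derivs_sum, ← coe_toDiffAlgHom, map_sum]
    refine sum_eq_zero fun a _ => ih (fun i => ?_) ?_
    · exact (sub_le_self d (Pi.single_nonneg.2 zero_le_one) i).trans (hM i)
    · simp only [Pi.sub_apply, sum_sub_distrib, sum_pi_single', mem_univ, if_true]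
      push_cast at h
      omega

theorem schur_eq_det_shiftMatrix {l : ℕ} (lam : Fin l → ℕ) :
    schur lam = (shiftMatrix pz fun a => (lam a : ℤ) - (a : ℕ)).det :=
  rfl

theorem statement13_general (l : ℕ) (lam : Fin l → ℕ)
    (hanti : Antitone lam)
    (n : ℕ) (hn : n < (∑ a ∈ Finset.Ico 1 l, pad lam a) - (l - 1)) :
    toDiff (derivs (List.replicate n 1) (schur lam)) = 0 := by
  obtain _ | k := l
  · simp at hn
  have htail : ∑ a ∈ Ico 1 (k + 1), pad lam a = ∑ i : Fin k, lam i.succ := by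
    rw [sum_Ico_eq_sum_range, Nat.add_sub_cancel, ← Fin.sum_univ_eq_sum_range]
    refine sum_congr rfl fun i _ => ?_
    simp [pad, add_comm, Fin.succ]
  have hindex : ∑ a : Fin (k + 1), ((a : ℕ) : ℤ) = ∑ i ∈ range k, (i : ℤ) + k := by
    rw [Fin.sum_univ_eq_sum_range (fun i => (i : ℤ)), sum_range_succ]
  rw [schur_eq_det_shiftMatrix]
  refine toDiff_derivs_replicate_det_shiftMatrix_pz_eq_zero n (M := lam 0) (fun a => ?_) ?_
  · have := hanti (Fin.zero_le a)
    omega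
  · have hcast : ((∑ i : Fin k, lam i.succ : ℕ) : ℤ) = ∑ i : Fin k, (lam i.succ : ℤ) := by
      push_cast; rfl
    rw [sum_sub_distrib, hindex, Fin.sum_univ_succ, Nat.add_sub_cancel]
    rw [htail, Nat.add_sub_cancel] at hn
    omega

/-- Let `λ` be a partition of length `l` and
`N'_{λ,1} = λ_2 + ⋯ + λ_l - (l-1)`. If `n < N'_{λ,1}`, then `∂_1^n s_λ(t)` evaluated at
`t = [x_1] - [x_2]` is identically zero. -/
theorem statement13 (l : ℕ) (lam : Fin l → ℕ)
    (hanti : Antitone lam) (hpos : ∀ i, 1 ≤ lam i)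
    (n : ℕ) (hn : n < (∑ a ∈ Finset.Ico 1 l, pad lam a) - (l - 1)) :
    toDiff (derivs (List.replicate n 1) (schur lam)) = 0 :=
  statement13_general l lam hanti n hn
end
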